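/- arXiv:2001.01434 — 5 statements merged into one kernel-verified Lean document; each statement's English description precedes it below -/
import Mathlib

section
/- Let p ≥ 1, let L : ℝ^p → ℝ be twice continuously differentiable with gradient S = ∇L, whose Hessian ∇²L(β) is positive definite at every β ∈ ℝ^p, and let β₀ ∈ ℝ^p satisfy S(β₀) = 0. Fix λ > 0 and define the Lyapunov function L_λ(Δ) = L(β₀ + Δ) − L(β₀) + λ‖Δ‖², where ‖·‖ is the Euclidean norm. Then there exist α > 0 and ε > 0 such that for all Δ with ‖Δ‖ < ε, ⟨∇L_λ(Δ), S(β₀ + Δ)⟩ ≥ α·L_λ(Δ). -/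
/-! The Hessian `H = D(∇L)(β₀)` is positive definite on a finite-dimensional space, hence
coercive: `m‖v‖² ≤ ⟪H v, v⟫` for some `m > 0`. Differentiability of `∇L` at `β₀` then gives
`⟪∇L(β₀ + Δ), Δ⟫ ≥ (m/2)‖Δ‖²` for small `Δ`, and since `∇L` vanishes at `β₀` to first order,
the mean value inequality gives `L(β₀ + Δ) - L(β₀) ≤ K‖Δ‖²`. As `∇L_λ(Δ) = ∇L(β₀ + Δ) + 2λΔ`,
the pairing is at least `2λ⟪∇L(β₀ + Δ), Δ⟫ ≥ λm‖Δ‖² ≥ α L_λ(Δ)` with `α = λm/(K + λ)`. -/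

open scoped RealInnerProductSpace
open Asymptotics Filter Topology Metric

section
variable {E : Type*} [NormedAddCommGroup E] [InnerProductSpace ℝ E]

theorem ContinuousLinearMap.exists_pos_mul_norm_sq_le_inner_apply_self [FiniteDimensional ℝ E]
    (T : E →L[ℝ] E) (hT : ∀ v, v ≠ 0 → 0 < ⟪T v, v⟫) :
    ∃ m, 0 < m ∧ ∀ v, m * ‖v‖ ^ 2 ≤ ⟪T v, v⟫ := by
  rcases subsingleton_or_nontrivial E with _ | _
  · exact ⟨1, one_pos, fun v => by simp [Subsingleton.elim v 0]⟩
  obtain ⟨u, hu, hmin⟩ := (isCompact_sphere (0 : E) 1).exists_isMinOn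
    (NormedSpace.sphere_nonempty.mpr zero_le_one)
    (by fun_prop : Continuous fun v : E => ⟪T v, v⟫).continuousOn
  refine ⟨⟪T u, u⟫, hT u (ne_of_mem_sphere hu one_ne_zero), fun v => ?_⟩
  rcases eq_or_ne v 0 with rfl | hv
  · simp
  have hv' : 0 < ‖v‖ := norm_pos_iff.mpr hv
  have hvu : ‖v‖⁻¹ • v ∈ sphere (0 : E) 1 := by
    rw [mem_sphere_zero_iff_norm, norm_smul, norm_inv, norm_norm, inv_mul_cancel₀ hv'.ne']
  have hmin_v := hmin hvu
  simp only [Set.mem_ofPred_eq, map_smul, real_inner_smul_left, real_inner_smul_right] at hmin_v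
  calc ⟪T u, u⟫ * ‖v‖ ^ 2 ≤ ‖v‖⁻¹ * (‖v‖⁻¹ * ⟪T v, v⟫) * ‖v‖ ^ 2 := by gcongr
    _ = ⟪T v, v⟫ := by field_simp

theorem HasFDerivAt.eventually_half_mul_norm_sq_le_inner_sub {S : E → E} {T : E →L[ℝ] E} {x₀ : E}
    (hS : HasFDerivAt S T x₀) {m : ℝ} (hm : 0 < m) (hT : ∀ v, m * ‖v‖ ^ 2 ≤ ⟪T v, v⟫) :
    ∀ᶠ x in 𝓝 x₀, m / 2 * ‖x - x₀‖ ^ 2 ≤ ⟪S x - S x₀, x - x₀⟫ := by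
  filter_upwards [hS.isLittleO.def (half_pos hm)] with x hx
  have hr : |⟪S x - S x₀ - T (x - x₀), x - x₀⟫| ≤ m / 2 * ‖x - x₀‖ ^ 2 :=
    (abs_real_inner_le_norm _ _).trans (by nlinarith [norm_nonneg (x - x₀)])
  rw [inner_sub_left] at hr
  linarith [(abs_le.mp hr).1, hT (x - x₀)]

end

theorem isBigO_sub_norm_sq_of_fderiv_isBigO {E F : Type*}
    [NormedAddCommGroup E] [NormedSpace ℝ E] [NormedAddCommGroup F] [NormedSpace ℝ F]
    {f : E → F} {f' : E → E →L[ℝ] F} {x₀ : E}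
    (hf : ∀ᶠ x in 𝓝 x₀, HasFDerivAt f (f' x) x) (hf' : f' =O[𝓝 x₀] (· - x₀)) :
    (f · - f x₀) =O[𝓝 x₀] (‖· - x₀‖ ^ 2) := by
  obtain ⟨C, hC, hCf'⟩ := hf'.exists_pos
  obtain ⟨ε, hε, hball⟩ := eventually_nhds_iff_ball.mp (hf.and hCf'.bound)
  refine IsBigO.of_bound C ?_
  filter_upwards [ball_mem_nhds x₀ hε] with x hx
  have hsub : closedBall x₀ (dist x x₀) ⊆ ball x₀ ε := closedBall_subset_ball hx
  have hmv := (convex_closedBall x₀ (dist x x₀)).norm_image_sub_le_of_norm_hasFDerivWithin_le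
    (fun y hy => (hball y (hsub hy)).1.hasFDerivWithinAt)
    (fun y hy => ((hball y (hsub hy)).2).trans
      (mul_le_mul_of_nonneg_left (by rwa [← dist_eq_norm, ← mem_closedBall]) hC.le))
    (mem_closedBall_self dist_nonneg) (mem_closedBall.mpr le_rfl)
  simpa only [norm_pow, norm_norm, dist_eq_norm, mul_assoc, ← sq] using hmv

section
variable {E : Type*} [NormedAddCommGroup E] [InnerProductSpace ℝ E] [CompleteSpace E]

theorem ContDiff.contDiff_gradient {f : E → ℝ} {n : WithTop ℕ∞} (hf : ContDiff ℝ (n + 1) f) :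
    ContDiff ℝ n (gradient f) := by
  have hgrad : gradient f = (InnerProductSpace.toDual ℝ E).symm ∘ fderiv ℝ f := by
    ext1 x; exact (InnerProductSpace.toDual ℝ E).eq_symm_apply.mpr toDual_gradient
  rw [hgrad]
  exact (InnerProductSpace.toDual ℝ E).symm.contDiff.comp (hf.fderiv_right le_rfl)

theorem isBigO_sub_norm_sq_of_gradient_isBigO {f : E → ℝ} {x₀ : E}
    (hf : ∀ᶠ x in 𝓝 x₀, DifferentiableAt ℝ f x) (hgrad : gradient f =O[𝓝 x₀] (· - x₀)) :
    (f · - f x₀) =O[𝓝 x₀] (‖· - x₀‖ ^ 2) := by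
  refine isBigO_sub_norm_sq_of_fderiv_isBigO (hf.mono fun x hx => hx.hasFDerivAt) ?_
  refine isBigO_norm_left.mp ((isBigO_norm_left.mpr hgrad).congr_left fun x => ?_)
  rw [← toDual_gradient, LinearIsometryEquiv.norm_map]

theorem HasGradientAt.hasGradientAt_comp_add_sub_add_mul_norm_sq {f : E → ℝ} {g x₀ Δ : E}
    (hf : HasGradientAt f g (x₀ + Δ)) (c lam : ℝ) :
    HasGradientAt (fun d => f (x₀ + d) - c + lam * ‖d‖ ^ 2) (g + (2 * lam) • Δ) Δ := by
  rw [hasGradientAt_iff_hasFDerivAt] at hf ⊢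
  refine (((hf.comp Δ ((hasFDerivAt_id Δ).const_add x₀)).sub_const c).add
    ((hasStrictFDerivAt_norm_sq Δ).hasFDerivAt.const_mul lam)).congr_fderiv ?_
  ext v
  simp only [add_apply, ContinuousLinearMap.comp_apply, smul_apply, ContinuousLinearMap.id_apply,
    InnerProductSpace.toDual_apply_apply, innerSL_apply_apply, inner_add_left,
    real_inner_smul_left, smul_eq_mul, nsmul_eq_mul]
  push_cast
  ring

end

theorem stmt2_general (p : ℕ)
    (L : EuclideanSpace ℝ (Fin p) → ℝ) (hL : ContDiff ℝ 2 L)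
    (hHess : ∀ β v : EuclideanSpace ℝ (Fin p),
      v ≠ 0 → 0 < ⟪fderiv ℝ (gradient L) β v, v⟫)
    (β₀ : EuclideanSpace ℝ (Fin p)) (hβ₀ : gradient L β₀ = 0)
    (lam : ℝ) (hlam : 0 < lam)
    (Llam : EuclideanSpace ℝ (Fin p) → ℝ)
    (hLlam : ∀ Δ, Llam Δ = L (β₀ + Δ) - L β₀ + lam * ‖Δ‖ ^ 2) :
    ∃ α : ℝ, 0 < α ∧ ∃ ε : ℝ, 0 < ε ∧
      ∀ Δ : EuclideanSpace ℝ (Fin p), ‖Δ‖ < ε →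
        α * Llam Δ ≤ ⟪gradient Llam Δ, gradient L (β₀ + Δ)⟫ := by
  have hLd : Differentiable ℝ L := hL.differentiable two_ne_zero
  have hS : HasFDerivAt (gradient L) (fderiv ℝ (gradient L) β₀) β₀ :=
    ((hL.contDiff_gradient (n := 1)).differentiable one_ne_zero β₀).hasFDerivAt
  obtain ⟨m, hm, hcoer⟩ :=
    (fderiv ℝ (gradient L) β₀).exists_pos_mul_norm_sq_le_inner_apply_self (hHess β₀)
  obtain ⟨K, hK, hquad⟩ := (isBigO_sub_norm_sq_of_gradient_isBigO
    (.of_forall fun x => hLd x) (by simpa [hβ₀] using hS.isBigO_sub)).exists_pos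
  have hnear : ∀ᶠ Δ in 𝓝 0, m / 2 * ‖Δ‖ ^ 2 ≤ ⟪gradient L (β₀ + Δ), Δ⟫ ∧
      L (β₀ + Δ) - L β₀ ≤ K * ‖Δ‖ ^ 2 := by
    have hshift : Tendsto (β₀ + ·) (𝓝 0) (𝓝 β₀) := by
      simpa using (continuous_const_add β₀).tendsto 0
    filter_upwards [hshift.eventually ((hS.eventually_half_mul_norm_sq_le_inner_sub hm hcoer).and
      hquad.bound)] with Δ ⟨hmono, hgrowth⟩
    simp only [add_sub_cancel_left, hβ₀, sub_zero, norm_pow, norm_norm] at hmono hgrowth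
    exact ⟨hmono, (Real.le_norm_self _).trans hgrowth⟩
  obtain ⟨ε, hε, hball⟩ := Metric.eventually_nhds_iff.mp hnear
  refine ⟨lam * m / (K + lam), by positivity, ε, hε, fun Δ hΔ => ?_⟩
  obtain ⟨hmono, hgrowth⟩ := hball (by simpa using hΔ)
  rw [show Llam = _ from funext hLlam,
    ((hLd _).hasGradientAt.hasGradientAt_comp_add_sub_add_mul_norm_sq (L β₀) lam).gradient,
    inner_add_left, real_inner_smul_left, real_inner_comm (gradient L (β₀ + Δ)) Δ,
    real_inner_self_eq_norm_sq]
  have hαK : lam * m / (K + lam) * (K + lam) = lam * m := by field_simp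
  calc lam * m / (K + lam) * (L (β₀ + Δ) - L β₀ + lam * ‖Δ‖ ^ 2)
      ≤ lam * m / (K + lam) * ((K + lam) * ‖Δ‖ ^ 2) := by gcongr; linarith
    _ = 2 * lam * (m / 2 * ‖Δ‖ ^ 2) := by rw [← mul_assoc, hαK]; ring
    _ ≤ ‖gradient L (β₀ + Δ)‖ ^ 2 + 2 * lam * ⟪gradient L (β₀ + Δ), Δ⟫ := by
      exact le_add_of_nonneg_of_le (sq_nonneg _) (by gcongr)

/-- part (ii) of the Lyapunov-function lemma: there exist `α > 0` and
`ε > 0` such that `⟨∇L_λ(Δ), S(β₀+Δ)⟩ ≥ α·L_λ(Δ)` for all `‖Δ‖ < ε`. -/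
theorem stmt2 (p : ℕ) (hp : 1 ≤ p)
    (L : EuclideanSpace ℝ (Fin p) → ℝ) (hL : ContDiff ℝ 2 L)
    (hHess : ∀ β v : EuclideanSpace ℝ (Fin p),
      v ≠ 0 → 0 < ⟪fderiv ℝ (gradient L) β v, v⟫)
    (β₀ : EuclideanSpace ℝ (Fin p)) (hβ₀ : gradient L β₀ = 0)
    (lam : ℝ) (hlam : 0 < lam)
    (Llam : EuclideanSpace ℝ (Fin p) → ℝ)
    (hLlam : ∀ Δ, Llam Δ = L (β₀ + Δ) - L β₀ + lam * ‖Δ‖ ^ 2) :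
    ∃ α : ℝ, 0 < α ∧ ∃ ε : ℝ, 0 < ε ∧
      ∀ Δ : EuclideanSpace ℝ (Fin p), ‖Δ‖ < ε →
        α * Llam Δ ≤ ⟪gradient Llam Δ, gradient L (β₀ + Δ)⟫ :=
  stmt2_general p L hL hHess β₀ hβ₀ lam hlam Llam hLlam
end

section
/- Let p ≥ 1, let L : ℝ^p → ℝ be twice continuously differentiable with gradient S = ∇L, whose Hessian ∇²L(β) is positive definite at every β ∈ ℝ^p, and let β₀ ∈ ℝ^p satisfy S(β₀) = 0. Fix λ > 0 and define the Lyapunov function L_λ(Δ) = L(β₀ + Δ) − L(β₀) + λ‖Δ‖², where ‖·‖ is the Euclidean norm. Then for every M > 0 there exists α_M > 0 such that ⟨∇L_λ(Δ), S(β₀ + Δ)⟩ ≥ α_M·L_λ(Δ) for all Δ with ‖Δ‖ ≤ M. -/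
/-!
On the compact ball `‖Δ‖ ≤ M` the Hessian is bounded below by some `μ > 0`. Write
`S = S(β₀ + Δ)`. The mean value theorem along the segment from `β₀` (where the gradient vanishes) to `β₀ + Δ`
gives `μ‖Δ‖² ≤ ⟪S, Δ⟫`, hence `μ‖Δ‖ ≤ ‖S‖`, while convexity of `L` gives
`L(β₀ + Δ) - L(β₀) ≤ ⟪S, Δ⟫`. As `⟪∇L_λ(Δ), S⟫ = ‖S‖² + 2λ⟪S, Δ⟫ ≥ μ²‖Δ‖² + 2λ⟪S, Δ⟫` and
`L_λ(Δ) ≤ ⟪S, Δ⟫ + λ‖Δ‖²`, one can take `α_M = min (2λ) (μ² / λ)`.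
-/

open scoped RealInnerProductSpace Gradient
open Set InnerProductSpace

section

variable {X E : Type*} [TopologicalSpace X] [NormedAddCommGroup E] [InnerProductSpace ℝ E]

lemma inner_smul_apply_smul (A : E →L[ℝ] E) (c : ℝ) (u : E) :
    ⟪A (c • u), c • u⟫ = c ^ 2 * ⟪A u, u⟫ := by
  rw [map_smul, real_inner_smul_left, real_inner_smul_right]
  ring

/-- Minimise `⟪H x u, u⟫` over the compact set `K × {‖u‖ = 1}`, then rescale. -/
lemma IsCompact.exists_pos_mul_norm_sq_le_inner [ProperSpace E] {K : Set X}
    (hK : IsCompact K) {H : X → E →L[ℝ] E} (hH : ContinuousOn H K)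
    (hpos : ∀ x ∈ K, ∀ v ≠ 0, 0 < ⟪H x v, v⟫) :
    ∃ μ > 0, ∀ x ∈ K, ∀ v, μ * ‖v‖ ^ 2 ≤ ⟪H x v, v⟫ := by
  have hcont : ContinuousOn (fun q : X × E => ⟪H q.1 q.2, q.2⟫) (K ×ˢ Metric.sphere 0 1) :=
    ((hH.comp continuousOn_fst fun _ hq => hq.1).clm_apply continuousOn_snd).inner
      continuousOn_snd
  obtain ⟨μ, hμ, hμK⟩ := (hK.prod (isCompact_sphere 0 1)).exists_forall_le' hcont
    fun q hq => hpos q.1 hq.1 q.2 (ne_zero_of_mem_unit_sphere ⟨q.2, hq.2⟩)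
  refine ⟨μ, hμ, fun x hx v => ?_⟩
  rcases eq_or_ne v 0 with rfl | hv
  · simp
  have hu : ‖v‖⁻¹ • v ∈ Metric.sphere (0 : E) 1 := by
    simp [norm_smul, hv]
  have hunit := hμK (x, ‖v‖⁻¹ • v) ⟨hx, hu⟩
  have hv' : v = ‖v‖ • ‖v‖⁻¹ • v := by
    rw [smul_smul, mul_inv_cancel₀ (norm_ne_zero_iff.mpr hv), one_smul]
  rw [hv', inner_smul_apply_smul, ← hv', mul_comm]
  gcongr

end

section

variable {E F : Type*} [NormedAddCommGroup E] [NormedSpace ℝ E] [NormedAddCommGroup F]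
  [NormedSpace ℝ F]

lemma HasFDerivAt.hasDerivAt_comp_add_smul {g : E → F} {g' : E →L[ℝ] F} {x v : E} {t : ℝ}
    (h : HasFDerivAt g g' (x + t • v)) : HasDerivAt (fun s : ℝ => g (x + s • v)) (g' v) t := by
  have hline : HasDerivAt (fun s : ℝ => x + s • v) v t := by
    simpa using ((hasDerivAt_id t).smul_const v).const_add x
  exact h.comp_hasDerivAt t hline

end

section

variable {E : Type*} [NormedAddCommGroup E] [InnerProductSpace ℝ E] [CompleteSpace E]
  {L : E → ℝ}

lemma ContDiff.gradient {m n : WithTop ℕ∞} (hL : ContDiff ℝ n L) (hmn : m + 1 ≤ n) :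
    ContDiff ℝ m (∇ L) :=
  (toDual ℝ E).symm.contDiff.comp (hL.fderiv_right hmn)

lemma hasGradientAt_sub_add_mul_norm_sq {x₀ v : E} (hL : DifferentiableAt ℝ L (x₀ + v))
    (c lam : ℝ) :
    HasGradientAt (fun w => L (x₀ + w) - c + lam * ‖w‖ ^ 2) (∇ L (x₀ + v) + (2 * lam) • v) v := by
  have hshift : HasFDerivAt (fun w => L (x₀ + w)) (fderiv ℝ L (x₀ + v)) v :=
    (hasFDerivAt_comp_add_left x₀).mpr hL.hasFDerivAt
  have hdual : toDual ℝ E (∇ L (x₀ + v) + (2 * lam) • v) =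
      fderiv ℝ L (x₀ + v) + lam • 2 • innerSL ℝ v := by
    ext w
    simp only [toDual_apply_apply, inner_add_left, real_inner_smul_left, inner_gradient_left,
      add_apply, smul_apply, coe_innerSL_apply, nsmul_eq_mul, smul_eq_mul]
    ring
  rw [hasGradientAt_iff_hasFDerivAt, hdual]
  exact (hshift.sub_const c).add ((hasStrictFDerivAt_norm_sq v).hasFDerivAt.const_mul lam)

variable (x v : E)

lemma hasDerivAt_inner_gradient_add_smul (hS : Differentiable ℝ (∇ L)) (t : ℝ) :
    HasDerivAt (fun s : ℝ => ⟪∇ L (x + s • v), v⟫) ⟪fderiv ℝ (∇ L) (x + t • v) v, v⟫ t := by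
  simpa using ((hS _).hasFDerivAt.hasDerivAt_comp_add_smul).inner ℝ (hasDerivAt_const t v)

/-- The slope `t ↦ ⟪∇L(x + t v), v⟫` is monotone, so the mean value slope on `[0, 1]` is at
most its value at `1`. -/
lemma sub_le_inner_gradient_of_inner_fderiv_gradient_nonneg (hL : Differentiable ℝ L)
    (hS : Differentiable ℝ (∇ L)) (hH : ∀ β w, 0 ≤ ⟪fderiv ℝ (∇ L) β w, w⟫) :
    L (x + v) - L x ≤ ⟪∇ L (x + v), v⟫ := by
  have hmono : Monotone fun s : ℝ => ⟪∇ L (x + s • v), v⟫ :=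
    monotone_of_hasDerivAt_nonneg (hasDerivAt_inner_gradient_add_smul x v hS) fun t => hH _ v
  have hf : ∀ t : ℝ, HasDerivAt (fun s : ℝ => L (x + s • v)) ⟪∇ L (x + t • v), v⟫ t := by
    intro t
    rw [inner_gradient_left]
    exact (hL _).hasFDerivAt.hasDerivAt_comp_add_smul
  obtain ⟨c, hc, hslope⟩ := exists_hasDerivAt_eq_slope _ _ one_pos
    (HasDerivAt.continuousOn fun t _ => hf t) fun t _ => hf t
  have hc1 := hmono hc.2.le
  simp only [one_smul, zero_smul, add_zero, sub_zero, div_one] at hslope hc1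
  linarith

lemma mul_norm_sq_le_inner_gradient_sub (hS : Differentiable ℝ (∇ L)) {μ : ℝ}
    (hμ : ∀ t ∈ Icc (0 : ℝ) 1, μ * ‖v‖ ^ 2 ≤ ⟪fderiv ℝ (∇ L) (x + t • v) v, v⟫) :
    μ * ‖v‖ ^ 2 ≤ ⟪∇ L (x + v) - ∇ L x, v⟫ := by
  have hg := hasDerivAt_inner_gradient_add_smul x v hS
  obtain ⟨c, hc, hslope⟩ := exists_hasDerivAt_eq_slope _ _ one_pos
    (HasDerivAt.continuousOn fun t _ => hg t) fun t _ => hg t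
  simp only [one_smul, zero_smul, add_zero, sub_zero, div_one] at hslope
  rw [inner_sub_left, ← hslope]
  exact hμ c (Ioo_subset_Icc_self hc)

end

lemma min_mul_le_inner_add_smul {E : Type*} [NormedAddCommGroup E] [InnerProductSpace ℝ E]
    {S Δ : E} {D μ lam : ℝ} (hμ : 0 ≤ μ) (hlam : 0 < lam) (hD : D ≤ ⟪S, Δ⟫)
    (hSΔ : μ * ‖Δ‖ ^ 2 ≤ ⟪S, Δ⟫) :
    min (2 * lam) (μ ^ 2 / lam) * (D + lam * ‖Δ‖ ^ 2) ≤ ⟪S + (2 * lam) • Δ, S⟫ := by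
  have hnormS : μ * ‖Δ‖ ≤ ‖S‖ := by
    rcases (norm_nonneg Δ).eq_or_lt with hΔ | hΔ
    · rw [← hΔ, mul_zero]; exact norm_nonneg S
    · nlinarith [real_inner_le_norm S Δ]
  have hα₁ : min (2 * lam) (μ ^ 2 / lam) ≤ 2 * lam := min_le_left _ _
  have hα₂ : min (2 * lam) (μ ^ 2 / lam) * lam ≤ μ ^ 2 :=
    (le_div_iff₀ hlam).mp (min_le_right _ _)
  have hα₀ : 0 ≤ min (2 * lam) (μ ^ 2 / lam) := by positivity
  have hSΔ₀ : 0 ≤ ⟪S, Δ⟫ := hSΔ.trans' (by positivity)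
  rw [inner_add_left, real_inner_smul_left, real_inner_self_eq_norm_sq, real_inner_comm S Δ]
  nlinarith [mul_le_mul_of_nonneg_left hD hα₀, mul_le_mul_of_nonneg_right hα₂ (sq_nonneg ‖Δ‖),
    mul_le_mul_of_nonneg_right hα₁ hSΔ₀, mul_le_mul hnormS hnormS (by positivity) (norm_nonneg S)]

theorem stmt3_general (p : ℕ)
    (L : EuclideanSpace ℝ (Fin p) → ℝ) (hL : ContDiff ℝ 2 L)
    (hHess : ∀ β v : EuclideanSpace ℝ (Fin p),
      v ≠ 0 → 0 < ⟪fderiv ℝ (gradient L) β v, v⟫)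
    (β₀ : EuclideanSpace ℝ (Fin p)) (hβ₀ : gradient L β₀ = 0)
    (lam : ℝ) (hlam : 0 < lam)
    (Llam : EuclideanSpace ℝ (Fin p) → ℝ)
    (hLlam : ∀ Δ, Llam Δ = L (β₀ + Δ) - L β₀ + lam * ‖Δ‖ ^ 2) :
    ∀ M : ℝ, 0 < M → ∃ αM : ℝ, 0 < αM ∧
      ∀ Δ : EuclideanSpace ℝ (Fin p), ‖Δ‖ ≤ M →
        αM * Llam Δ ≤ ⟪gradient Llam Δ, gradient L (β₀ + Δ)⟫ := by
  intro M hM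
  have hLdiff : Differentiable ℝ L := hL.differentiable (by norm_num)
  have hS : ContDiff ℝ 1 (∇ L) := hL.gradient (by norm_num)
  have hSdiff : Differentiable ℝ (∇ L) := hS.differentiable one_ne_zero
  obtain ⟨μ, hμ, hμball⟩ := (isCompact_closedBall β₀ M).exists_pos_mul_norm_sq_le_inner
    (hS.continuous_fderiv one_ne_zero).continuousOn fun β _ => hHess β
  refine ⟨min (2 * lam) (μ ^ 2 / lam), by positivity, fun Δ hΔ => ?_⟩
  have hΔball : β₀ + Δ ∈ Metric.closedBall β₀ M := by simpa using hΔ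
  have hconvex := sub_le_inner_gradient_of_inner_fderiv_gradient_nonneg β₀ Δ hLdiff hSdiff
    fun β w => (eq_or_ne w 0).elim (fun hw => by simp [hw]) fun hw => (hHess β w hw).le
  have hstrong := mul_norm_sq_le_inner_gradient_sub β₀ Δ hSdiff fun t ht =>
    hμball _ ((convex_closedBall β₀ M).add_smul_mem (Metric.mem_closedBall_self hM.le) hΔball ht) Δ
  rw [hβ₀, sub_zero] at hstrong
  rw [funext hLlam, (hasGradientAt_sub_add_mul_norm_sq (hLdiff _) _ _).gradient]
  exact min_mul_le_inner_add_smul hμ.le hlam hconvex hstrong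

/-- the uniform-on-balls Lyapunov bound: for every `M > 0` there is
`α_M > 0` with `⟨∇L_λ(Δ), S(β₀+Δ)⟩ ≥ α_M·L_λ(Δ)` for all `‖Δ‖ ≤ M`. -/
theorem stmt3 (p : ℕ) (hp : 1 ≤ p)
    (L : EuclideanSpace ℝ (Fin p) → ℝ) (hL : ContDiff ℝ 2 L)
    (hHess : ∀ β v : EuclideanSpace ℝ (Fin p),
      v ≠ 0 → 0 < ⟪fderiv ℝ (gradient L) β v, v⟫)
    (β₀ : EuclideanSpace ℝ (Fin p)) (hβ₀ : gradient L β₀ = 0)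
    (lam : ℝ) (hlam : 0 < lam)
    (Llam : EuclideanSpace ℝ (Fin p) → ℝ)
    (hLlam : ∀ Δ, Llam Δ = L (β₀ + Δ) - L β₀ + lam * ‖Δ‖ ^ 2) :
    ∀ M : ℝ, 0 < M → ∃ αM : ℝ, 0 < αM ∧
      ∀ Δ : EuclideanSpace ℝ (Fin p), ‖Δ‖ ≤ M →
        αM * Llam Δ ≤ ⟪gradient Llam Δ, gradient L (β₀ + Δ)⟫ :=
  stmt3_general p L hL hHess β₀ hβ₀ lam hlam Llam hLlam
end

section
/- Let p ≥ 1 and let H₀ be a symmetric positive definite real p×p matrix. Let γ_i = γ₁ i^{−α} with γ₁ > 0 and α ∈ (0.5, 1). For integers 1 ≤ j ≤ n define A_j^n = γ_j ∑_{i=j}^n ∏_{l=j+1}^i (I − γ_l H₀) (with the empty product ∏_{l=j+1}^j (I − γ_l H₀) = I) and B_j^n = A_j^n − H₀⁻¹. Then there exists a constant M > 0 such that ‖B_j^n‖ ≤ M for all j and all n ≥ j, where ‖·‖ denotes the operator norm of a matrix. -/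
open Filter Matrix

/-- The operator (`ℓ²→ℓ²`) norm of a real matrix. -/
noncomputable def matOpNorm {p : ℕ} (A : Matrix (Fin p) (Fin p) ℝ) : ℝ :=
  ‖LinearMap.toContinuousLinearMap (Matrix.toEuclideanLin A)‖

/-!
Write `S_j^n = ∑_{i=j}^n ∏_{l=j+1}^i (I - γ_l H₀)`, so that `A_j^n = γ_j S_j^n` and
`S_j^n = I + (I - γ_{j+1} H₀) S_{j+1}^n`. Coercivity `μ‖x‖² ≤ ⟪x, H₀ x⟫` gives
`‖I - γ H₀‖ ≤ 1 - (μ/2) γ` for small `γ`, and `1/γ_{l+1} - 1/γ_l = ((l+1)^α - l^α)/γ₁ → 0`.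
With these two facts the bound `γ_j ‖S_j^n‖ ≤ 4/μ` passes from `j + 1` to `j` through the
recursion, for all `j` beyond some `N`; the finitely many `j < N` are bounded by the same
recursion, and `‖B_j^n‖ ≤ ‖A_j^n‖ + ‖H₀⁻¹‖`.
-/

open Topology
open scoped Matrix.Norms.L2Operator RealInnerProductSpace

section ProdSum

variable {R : Type*} [NormedRing R]

/-- `prodSum a j n = ∑_{i=j}^n a_{j+1} * ⋯ * a_i`, which is `0` when `n < j`. -/
def prodSum (a : ℕ → R) (j n : ℕ) : R :=
  ∑ i ∈ Finset.Icc j n, ((List.range' (j + 1) (i - j)).map a).prod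

lemma prodSum_of_lt (a : ℕ → R) {j n : ℕ} (h : n < j) : prodSum a j n = 0 := by
  simp [prodSum, Finset.Icc_eq_empty_of_lt h]

lemma prodSum_eq_one_add_mul (a : ℕ → R) {j n : ℕ} (h : j ≤ n) :
    prodSum a j n = 1 + a (j + 1) * prodSum a (j + 1) n := by
  rw [prodSum, ← Finset.add_sum_Ioc_eq_sum_Icc h, ← Finset.Icc_add_one_left_eq_Ioc, prodSum,
    Finset.mul_sum]
  congr 1
  · simp
  refine Finset.sum_congr rfl fun i hi => ?_
  rw [show i - j = i - (j + 1) + 1 by grind, List.range'_succ, List.map_cons,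
    List.prod_cons]

variable [NormOneClass R]

lemma norm_prodSum_le (a : ℕ → R) (j n : ℕ) :
    ‖prodSum a j n‖ ≤ 1 + ‖a (j + 1)‖ * ‖prodSum a (j + 1) n‖ := by
  rcases le_or_gt j n with h | h
  · rw [prodSum_eq_one_add_mul a h]
    exact (norm_add_le _ _).trans (by rw [norm_one]; gcongr; exact norm_mul_le _ _)
  · rw [prodSum_of_lt a h, norm_zero]
    positivity

/-- Multiplying `prodSum a j n = 1 + a_{j+1} * prodSum a (j+1) n` by `γ_j γ_{j+1}` shows that
the bound `2 / c` passes from `j + 1` to `j` exactly when `1/γ_{j+1} - 1/γ_j ≤ c/2`. -/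
lemma mul_norm_prodSum_le {a : ℕ → R} {γ : ℕ → ℝ} {c : ℝ} {N : ℕ} (hc : 0 < c)
    (hγ : ∀ l ≥ N, 0 < γ l) (ha : ∀ l ≥ N, ‖a l‖ ≤ 1 - c * γ l)
    (hγinv : ∀ l ≥ N, (γ (l + 1))⁻¹ - (γ l)⁻¹ ≤ c / 2) {j : ℕ} (hj : N ≤ j) (n : ℕ) :
    γ j * ‖prodSum a j n‖ ≤ 2 / c := by
  suffices ∀ k j, N ≤ j → n < j + k → γ j * ‖prodSum a j n‖ ≤ 2 / c from
    this (n + 1) j hj (by omega)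
  intro k
  induction k with
  | zero =>
    intro j _ h
    rw [prodSum_of_lt a (by omega), norm_zero, mul_zero]
    positivity
  | succ k ih =>
    intro j hj h
    have hg := hγ j hj
    have hg' := hγ (j + 1) (by omega)
    have hstep : γ j - γ (j + 1) ≤ c / 2 * (γ j * γ (j + 1)) := by
      have := hγinv j hj
      rw [inv_sub_inv hg'.ne' hg.ne', div_le_iff₀ (by positivity)] at this
      linarith
    have hnext := ih (j + 1) (by omega) (by omega)
    have hb := ha (j + 1) (by omega)
    rw [← mul_le_mul_iff_right₀ hg']
    calc γ (j + 1) * (γ j * ‖prodSum a j n‖)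
        ≤ γ (j + 1) * (γ j * (1 + ‖a (j + 1)‖ * ‖prodSum a (j + 1) n‖)) := by
          gcongr; exact norm_prodSum_le a j n
      _ = γ j * γ (j + 1) + γ j * ‖a (j + 1)‖ * (γ (j + 1) * ‖prodSum a (j + 1) n‖) := by ring
      _ ≤ γ j * γ (j + 1) + γ j * (1 - c * γ (j + 1)) * (2 / c) := by
          gcongr; exact mul_nonneg hg.le ((norm_nonneg _).trans hb)
      _ = 2 / c * γ j - γ j * γ (j + 1) := by field_simp; ring
      _ ≤ γ (j + 1) * (2 / c) := by
          have := mul_le_mul_of_nonneg_left hstep (by positivity : 0 ≤ 2 / c)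
          field_simp at this ⊢
          linarith

lemma exists_norm_prodSum_le_of_le (a : ℕ → R) {N : ℕ} {M : ℝ}
    (hN : ∀ n, ‖prodSum a N n‖ ≤ M) {j : ℕ} (hj : j ≤ N) : ∃ M', ∀ n, ‖prodSum a j n‖ ≤ M' := by
  induction hj using Nat.decreasingInduction with
  | self => exact ⟨M, hN⟩
  | of_succ k _ ih =>
    obtain ⟨M', hM'⟩ := ih
    exact ⟨1 + ‖a (k + 1)‖ * M', fun n => (norm_prodSum_le a k n).trans (by gcongr; exact hM' n)⟩

theorem exists_norm_smul_prodSum_le [NormedSpace ℝ R] {a : ℕ → R} {γ : ℕ → ℝ} {c : ℝ}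
    (hc : 0 < c)
    (h : ∀ᶠ l in atTop, 0 < γ l ∧ ‖a l‖ ≤ 1 - c * γ l ∧ (γ (l + 1))⁻¹ - (γ l)⁻¹ ≤ c / 2) :
    ∃ M, ∀ j n, ‖γ j • prodSum a j n‖ ≤ M := by
  obtain ⟨N, hN⟩ := eventually_atTop.1 h
  have htail {j : ℕ} (hj : N ≤ j) (n : ℕ) : γ j * ‖prodSum a j n‖ ≤ 2 / c :=
    mul_norm_prodSum_le hc (fun l hl => (hN l hl).1) (fun l hl => (hN l hl).2.1)
      (fun l hl => (hN l hl).2.2) hj n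
  have hhead (j : ℕ) (hj : j ≤ N) : ∃ M', ∀ n, ‖prodSum a j n‖ ≤ M' :=
    exists_norm_prodSum_le_of_le a (M := 2 / c / γ N)
      (fun n => by rw [le_div_iff₀ (hN N le_rfl).1, mul_comm]; exact htail le_rfl n) hj
  choose! M hM using hhead
  obtain ⟨M₀, hM₀⟩ := ((Finset.range N).image fun j => |γ j| * M j).exists_le
  refine ⟨max (2 / c) M₀, fun j n => ?_⟩
  rw [norm_smul, Real.norm_eq_abs]
  rcases le_or_gt N j with hj | hj
  · rw [abs_of_pos (hN j hj).1]
    exact (htail hj n).trans (le_max_left _ _)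
  · calc |γ j| * ‖prodSum a j n‖ ≤ |γ j| * M j := by gcongr; exact hM j hj.le n
      _ ≤ M₀ := hM₀ _ (Finset.mem_image_of_mem _ (Finset.mem_range.2 hj))
      _ ≤ max (2 / c) M₀ := le_max_right _ _

end ProdSum

section Coercive

variable {E : Type*} [NormedAddCommGroup E] [InnerProductSpace ℝ E]

lemma exists_pos_mul_norm_sq_le_inner [FiniteDimensional ℝ E] {T : E →L[ℝ] E}
    (hT : ∀ x ≠ 0, 0 < ⟪x, T x⟫) : ∃ μ > 0, ∀ x, μ * ‖x‖ ^ 2 ≤ ⟪x, T x⟫ := by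
  rcases subsingleton_or_nontrivial E with hE | hE
  · exact ⟨1, one_pos, fun x => by simp [Subsingleton.elim x 0]⟩
  have hcont : Continuous fun x : E => ⟪x, T x⟫ := by fun_prop
  obtain ⟨x₀, hx₀, hmin⟩ := (isCompact_sphere (0 : E) 1).exists_isMinOn
    (NormedSpace.sphere_nonempty.2 zero_le_one) hcont.continuousOn
  refine ⟨⟪x₀, T x₀⟫, hT x₀ (ne_zero_of_mem_unit_sphere ⟨x₀, hx₀⟩), fun x => ?_⟩
  rcases eq_or_ne x 0 with rfl | hx
  · simp
  have : ⟪x₀, T x₀⟫ ≤ ⟪‖x‖⁻¹ • x, T (‖x‖⁻¹ • x)⟫ :=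
    hmin (show ‖x‖⁻¹ • x ∈ Metric.sphere (0 : E) 1 by simp [norm_smul, hx])
  simp only [map_smul, real_inner_smul_left, real_inner_smul_right] at this
  calc ⟪x₀, T x₀⟫ * ‖x‖ ^ 2 ≤ ‖x‖⁻¹ * (‖x‖⁻¹ * ⟪x, T x⟫) * ‖x‖ ^ 2 := by gcongr
    _ = ⟪x, T x⟫ := by field_simp

lemma norm_one_sub_smul_le {T : E →L[ℝ] E} {μ g : ℝ} (hT : ∀ x, μ * ‖x‖ ^ 2 ≤ ⟪x, T x⟫)
    (hg : 0 ≤ g) (hgT : g * ‖T‖ ^ 2 ≤ μ) (hgμ : μ * g ≤ 2) : ‖1 - g • T‖ ≤ 1 - μ / 2 * g := by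
  refine ContinuousLinearMap.opNorm_le_bound _ (by linarith) fun x => ?_
  rw [← sq_le_sq₀ (norm_nonneg _) (by nlinarith [norm_nonneg x])]
  have hTx : ‖T x‖ ^ 2 ≤ ‖T‖ ^ 2 * ‖x‖ ^ 2 := by
    rw [← mul_pow]; gcongr; exact T.le_opNorm x
  calc ‖(1 - g • T) x‖ ^ 2 = ‖x‖ ^ 2 - 2 * g * ⟪x, T x⟫ + g ^ 2 * ‖T x‖ ^ 2 := by
        rw [_root_.sub_apply, one_apply_eq_self, _root_.smul_apply,
          norm_sub_sq_real, real_inner_smul_right, norm_smul,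
          Real.norm_eq_abs, abs_of_nonneg hg]
        ring
    _ ≤ ‖x‖ ^ 2 - 2 * g * (μ * ‖x‖ ^ 2) + g * (g * ‖T‖ ^ 2) * ‖x‖ ^ 2 := by
        have := hT x
        nlinarith [mul_le_mul_of_nonneg_left hTx (sq_nonneg g)]
    _ ≤ ‖x‖ ^ 2 - 2 * g * (μ * ‖x‖ ^ 2) + g * μ * ‖x‖ ^ 2 := by gcongr
    _ ≤ ((1 - μ / 2 * g) * ‖x‖) ^ 2 := by nlinarith [sq_nonneg (μ * g * ‖x‖)]

lemma eventually_norm_one_sub_smul_le {ι : Type*} {L : Filter ι} {T : E →L[ℝ] E} {μ : ℝ}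
    (hμ : 0 < μ) (hT : ∀ x, μ * ‖x‖ ^ 2 ≤ ⟪x, T x⟫) {g : ι → ℝ} (hg : ∀ᶠ i in L, 0 ≤ g i)
    (hg0 : Tendsto g L (𝓝 0)) : ∀ᶠ i in L, ‖1 - g i • T‖ ≤ 1 - μ / 2 * g i := by
  have hgT : ∀ᶠ i in L, g i * ‖T‖ ^ 2 < μ :=
    (hg0.mul_const _).eventually_lt_const (by simpa using hμ)
  have hgμ : ∀ᶠ i in L, μ * g i < 2 :=
    (hg0.const_mul μ).eventually_lt_const (by simp)
  filter_upwards [hg, hgT, hgμ] with i hi hiT hiμ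
  exact norm_one_sub_smul_le hT hi hiT.le hiμ.le

end Coercive

lemma tendsto_add_one_rpow_sub_rpow {α : ℝ} (h0 : 0 ≤ α) (h1 : α < 1) :
    Tendsto (fun x : ℝ => (x + 1) ^ α - x ^ α) atTop (𝓝 0) := by
  have hlim : Tendsto (fun x : ℝ => α * x ^ (α - 1)) atTop (𝓝 0) := by
    simpa using (tendsto_rpow_neg_atTop (by linarith : 0 < 1 - α)).const_mul α
  refine tendsto_of_tendsto_of_tendsto_of_le_of_le' tendsto_const_nhds hlim ?_ ?_
  · filter_upwards [eventually_ge_atTop 0] with x hx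
    exact sub_nonneg.2 (Real.rpow_le_rpow hx (by linarith) h0)
  · filter_upwards [eventually_gt_atTop 0] with x hx
    have hsplit : (x + 1) ^ α = x ^ α * (1 + x⁻¹) ^ α := by
      rw [← Real.mul_rpow hx.le (by positivity), mul_add, mul_inv_cancel₀ hx.ne', mul_one]
    have hbern := rpow_one_add_le_one_add_mul_self (by linarith [inv_pos.2 hx] : -1 ≤ x⁻¹) h0 h1.le
    rw [hsplit, Real.rpow_sub_one hx.ne']
    calc x ^ α * (1 + x⁻¹) ^ α - x ^ α ≤ x ^ α * (1 + α * x⁻¹) - x ^ α := by gcongr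
      _ = α * (x ^ α / x) := by ring

section PolynomialSchedule

variable {γ : ℕ → ℝ} {γ₁ α : ℝ}

lemma tendsto_polynomialSchedule_zero (hγ : ∀ i : ℕ, γ i = γ₁ * (i : ℝ) ^ (-α)) (hα : 0 < α) :
    Tendsto γ atTop (𝓝 0) := by
  simpa [funext hγ] using
    ((tendsto_rpow_neg_atTop hα).comp tendsto_natCast_atTop_atTop).const_mul γ₁

lemma eventually_polynomialSchedule_pos (hγ : ∀ i : ℕ, γ i = γ₁ * (i : ℝ) ^ (-α))
    (hγ₁ : 0 < γ₁) : ∀ᶠ l in atTop, 0 < γ l := by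
  filter_upwards [eventually_ge_atTop 1] with l hl
  have : (0 : ℝ) < l := by exact_mod_cast hl
  rw [hγ]
  positivity

lemma tendsto_inv_polynomialSchedule_succ_sub (hγ : ∀ i : ℕ, γ i = γ₁ * (i : ℝ) ^ (-α))
    (h0 : 0 ≤ α) (h1 : α < 1) :
    Tendsto (fun l => (γ (l + 1))⁻¹ - (γ l)⁻¹) atTop (𝓝 0) := by
  have hinv (x : ℝ) (hx : 0 ≤ x) : (γ₁ * x ^ (-α))⁻¹ = γ₁⁻¹ * x ^ α := by
    rw [Real.rpow_neg hx, mul_inv, inv_inv]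
  have := ((tendsto_add_one_rpow_sub_rpow h0 h1).comp tendsto_natCast_atTop_atTop).const_mul γ₁⁻¹
  rw [mul_zero] at this
  refine this.congr fun l => ?_
  simp only [Function.comp_apply, hγ, Nat.cast_add, Nat.cast_one, hinv _ (Nat.cast_nonneg _),
    hinv _ (by positivity : (0 : ℝ) ≤ l + 1)]
  ring

end PolynomialSchedule

theorem stmt4_general (p : ℕ) (hp : 1 ≤ p)
    (H₀ : Matrix (Fin p) (Fin p) ℝ) (hH₀ : H₀.PosDef)
    (γ₁ α : ℝ) (hγ₁ : 0 < γ₁) (hα : 1 / 2 < α ∧ α < 1)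
    (γ : ℕ → ℝ) (hγ : ∀ i : ℕ, γ i = γ₁ * (i : ℝ) ^ (-α))
    (A B : ℕ → ℕ → Matrix (Fin p) (Fin p) ℝ)
    (hA : ∀ j n, A j n = γ j • ∑ i ∈ Finset.Icc j n,
      (((List.range' (j + 1) (i - j)).map
        fun l => (1 : Matrix (Fin p) (Fin p) ℝ) - γ l • H₀).prod))
    (hB : ∀ j n, B j n = A j n - H₀⁻¹) :
    ∃ M : ℝ, 0 < M ∧ ∀ j n : ℕ, 1 ≤ j → j ≤ n → matOpNorm (B j n) ≤ M := by
  have : Nonempty (Fin p) := ⟨⟨0, hp⟩⟩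
  obtain ⟨μ, hμ, hH₀μ⟩ :=
    exists_pos_mul_norm_sq_le_inner (T := toEuclideanCLM (𝕜 := ℝ) H₀) fun x hx => by
      rw [inner_toEuclideanCLM]
      simpa using hH₀.dotProduct_mulVec_pos (x := x.ofLp) (by simpa using hx)
  have hγpos := eventually_polynomialSchedule_pos hγ hγ₁
  have hcontr : ∀ᶠ l in atTop, ‖1 - γ l • H₀‖ ≤ 1 - μ / 2 * γ l := by
    simpa only [cstar_norm_def, map_sub, map_one, map_smul] using
      eventually_norm_one_sub_smul_le hμ hH₀μ (hγpos.mono fun _ => le_of_lt)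
        (tendsto_polynomialSchedule_zero hγ (by linarith))
  have hinv : ∀ᶠ l in atTop, (γ (l + 1))⁻¹ - (γ l)⁻¹ ≤ μ / 2 / 2 :=
    ((tendsto_inv_polynomialSchedule_succ_sub hγ (by linarith) hα.2).eventually_lt_const
      (by positivity)).mono fun _ => le_of_lt
  obtain ⟨M, hM⟩ := exists_norm_smul_prodSum_le (half_pos hμ) (hγpos.and (hcontr.and hinv))
  refine ⟨M + ‖H₀⁻¹‖ + 1, by linarith [(norm_nonneg _).trans (hM 0 0), norm_nonneg H₀⁻¹],
    fun j n _ _ => ?_⟩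
  calc matOpNorm (B j n) = ‖γ j • prodSum (fun l => 1 - γ l • H₀) j n - H₀⁻¹‖ := by
        rw [hB, hA]; rfl
    _ ≤ M + ‖H₀⁻¹‖ := (norm_sub_le _ _).trans (by gcongr; exact hM j n)
    _ ≤ M + ‖H₀⁻¹‖ + 1 := by linarith

/-- uniform boundedness of `B_j^n = A_j^n − H₀⁻¹`
(Lemma 1 of Polyak–Juditsky, first part). -/
theorem stmt4 (p : ℕ) (hp : 1 ≤ p)
    (H₀ : Matrix (Fin p) (Fin p) ℝ) (hH₀symm : H₀.IsSymm) (hH₀ : H₀.PosDef)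
    (γ₁ α : ℝ) (hγ₁ : 0 < γ₁) (hα : 1 / 2 < α ∧ α < 1)
    (γ : ℕ → ℝ) (hγ : ∀ i : ℕ, γ i = γ₁ * (i : ℝ) ^ (-α))
    (A B : ℕ → ℕ → Matrix (Fin p) (Fin p) ℝ)
    (hA : ∀ j n, A j n = γ j • ∑ i ∈ Finset.Icc j n,
      (((List.range' (j + 1) (i - j)).map
        fun l => (1 : Matrix (Fin p) (Fin p) ℝ) - γ l • H₀).prod))
    (hB : ∀ j n, B j n = A j n - H₀⁻¹) :
    ∃ M : ℝ, 0 < M ∧ ∀ j n : ℕ, 1 ≤ j → j ≤ n → matOpNorm (B j n) ≤ M :=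
  stmt4_general p hp H₀ hH₀ γ₁ α hγ₁ hα γ hγ A B hA hB
end

section
/- Let p ≥ 1 and let H₀ be a symmetric positive definite real p×p matrix. Let γ_i = γ₁ i^{−α} with γ₁ > 0 and α ∈ (0.5, 1). For integers 1 ≤ j ≤ n define A_j^n = γ_j ∑_{i=j}^n ∏_{l=j+1}^i (I − γ_l H₀) (with the empty product ∏_{l=j+1}^j (I − γ_l H₀) = I) and B_j^n = A_j^n − H₀⁻¹. Then (1/n) ∑_{j=1}^n B_j^n → 0 (the zero matrix) as n → ∞. -/
/-!
With `Q n = ∏_{l=1}^n (I - γ_l H₀)`, the telescoping identity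
`H₀ ∑_{j=1}^n γ_j ∏_{l=j+1}^n (I - γ_l H₀) = I - Q n` and an exchange of the two sums give
`∑_{j=1}^n B_j^n = -H₀⁻¹ ∑_{i=1}^n Q i`. Positive definiteness makes `I - t H₀` a contraction,
`‖I - t H₀‖ ≤ exp (-c t)` for small `t ≥ 0`; as `γ_l → 0` and `∑ γ_l = ∞` (because `α ≤ 1`), this
gives `‖Q n‖ ≤ C exp (-c ∑_{l ≤ n} γ_l) → 0`, and the Cesàro means of `Q` tend to `0` with it.
-/

open Filter Matrix

open Finset Topology
open scoped Matrix.Norms.L2Operator RealInnerProductSpace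

section ProdOneSub

variable {R : Type*} [Ring R]

/-- The ordered product `(1 - a (j + 1)) * ⋯ * (1 - a m)`, equal to `1` when `m ≤ j`. -/
def prodOneSub (a : ℕ → R) (j m : ℕ) : R :=
  ((List.range' (j + 1) (m - j)).map fun l => 1 - a l).prod

@[simp] lemma prodOneSub_self (a : ℕ → R) (j : ℕ) : prodOneSub a j j = 1 := by
  simp [prodOneSub]

lemma prodOneSub_succ (a : ℕ → R) {j n : ℕ} (h : j ≤ n) :
    prodOneSub a j (n + 1) = prodOneSub a j n * (1 - a (n + 1)) := by
  rw [prodOneSub, prodOneSub, show n + 1 - j = n - j + 1 by omega, List.range'_1_concat,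
    List.map_append, List.prod_append, show j + 1 + (n - j) = n + 1 by omega]
  simp

lemma sum_mul_prodOneSub (a : ℕ → R) (n : ℕ) :
    ∑ j ∈ Icc 1 n, a j * prodOneSub a j n = 1 - prodOneSub a 0 n := by
  induction n with
  | zero => simp
  | succ n ih =>
    rw [sum_Icc_succ_top (by omega), prodOneSub_self, mul_one, prodOneSub_succ a (Nat.zero_le n)]
    have hstep : ∀ j ∈ Icc 1 n,
        a j * prodOneSub a j (n + 1) = a j * prodOneSub a j n * (1 - a (n + 1)) :=
      fun j hj => by rw [prodOneSub_succ a (mem_Icc.1 hj).2, mul_assoc]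
    rw [sum_congr rfl hstep, ← sum_mul, ih]
    noncomm_ring

variable {𝕜 : Type*} [CommRing 𝕜] [Algebra 𝕜 R]

lemma sum_smul_sum_prodOneSub_sub {H H' : R} (hH : H' * H = 1) (γ : ℕ → 𝕜) (n : ℕ) :
    ∑ j ∈ Icc 1 n, (γ j • ∑ i ∈ Icc j n, prodOneSub (fun l => γ l • H) j i - H')
      = -(H' * ∑ i ∈ Icc 1 n, prodOneSub (fun l => γ l • H) 0 i) := by
  set a : ℕ → R := fun l => γ l • H
  have hswap : ∑ j ∈ Icc 1 n, γ j • ∑ i ∈ Icc j n, prodOneSub a j i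
      = ∑ i ∈ Icc 1 n, ∑ j ∈ Icc 1 i, γ j • prodOneSub a j i := by
    simp_rw [smul_sum]
    exact sum_comm' fun j i => by simp only [mem_Icc]; omega
  have hrow (i : ℕ) :
      ∑ j ∈ Icc 1 i, γ j • prodOneSub a j i = H' * (1 - prodOneSub a 0 i) := by
    rw [← sum_mul_prodOneSub, mul_sum]
    refine sum_congr rfl fun j _ => ?_
    rw [show a j = γ j • H from rfl, smul_mul_assoc, mul_smul_comm, ← mul_assoc, hH, one_mul]
  rw [sum_sub_distrib, hswap, sum_congr rfl fun i _ => hrow i, ← mul_sum, sum_sub_distrib,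
    mul_sub]
  simp only [sum_const, mul_smul_comm, mul_one]
  abel

end ProdOneSub

section NormedRing

variable {R : Type*} [NormedRing R]

lemma norm_prodOneSub_zero_le {a : ℕ → R} {f : ℕ → ℝ} {N : ℕ}
    (h : ∀ l > N, ‖1 - a l‖ ≤ Real.exp (-f l)) {n : ℕ} (hn : N ≤ n) :
    ‖prodOneSub a 0 n‖ ≤ ‖prodOneSub a 0 N‖ * Real.exp (-∑ l ∈ Ioc N n, f l) := by
  induction n, hn using Nat.le_induction with
  | base => simp
  | succ n hn ih =>
    rw [prodOneSub_succ a (Nat.zero_le n), sum_Ioc_succ_top hn, neg_add, Real.exp_add,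
      ← mul_assoc]
    exact (norm_mul_le _ _).trans
      (mul_le_mul ih (h _ (by omega)) (norm_nonneg _) (by positivity))

lemma tendsto_prodOneSub_zero {a : ℕ → R} {f : ℕ → ℝ}
    (h : ∀ᶠ l in atTop, ‖1 - a l‖ ≤ Real.exp (-f l))
    (hf : Tendsto (fun n => ∑ l ∈ range n, f l) atTop atTop) :
    Tendsto (prodOneSub a 0) atTop (𝓝 0) := by
  obtain ⟨N, hN⟩ := eventually_atTop.1 h
  have hsum : Tendsto (fun n => ∑ l ∈ Ioc N n, f l) atTop atTop := by
    refine (tendsto_atTop_add_const_left _ (-∑ l ∈ range (N + 1), f l)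
      (hf.comp (tendsto_add_atTop_nat 1))).congr' ?_
    filter_upwards [eventually_ge_atTop N] with n hn
    rw [Function.comp_apply, ← sum_range_add_sum_Ico f (by omega : N + 1 ≤ n + 1),
      Ico_add_one_add_one_eq_Ioc, neg_add_cancel_left]
  rw [tendsto_zero_iff_norm_tendsto_zero]
  refine squeeze_zero' (Eventually.of_forall fun _ => norm_nonneg _)
    ((eventually_ge_atTop N).mono fun n hn =>
      norm_prodOneSub_zero_le (fun l hl => hN l hl.le) hn) ?_
  simpa using (Real.tendsto_exp_atBot.comp (tendsto_neg_atTop_atBot.comp hsum)).const_mul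
    ‖prodOneSub a 0 N‖

end NormedRing

namespace ContinuousLinearMap

variable {E : Type*} [NormedAddCommGroup E] [InnerProductSpace ℝ E]

lemma exists_pos_mul_norm_sq_le_inner [FiniteDimensional ℝ E] (T : E →L[ℝ] E)
    (hT : ∀ x ≠ 0, 0 < ⟪T x, x⟫) : ∃ μ > 0, ∀ x, μ * ‖x‖ ^ 2 ≤ ⟪T x, x⟫ := by
  rcases subsingleton_or_nontrivial E with hE | hE
  · exact ⟨1, one_pos, fun x => by simp [Subsingleton.elim x 0]⟩
  obtain ⟨x₀, hx₀, hmin⟩ := (isCompact_sphere (0 : E) 1).exists_isMinOn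
    (NormedSpace.sphere_nonempty.2 zero_le_one)
    (T.continuous.inner (𝕜 := ℝ) continuous_id).continuousOn
  have hx₀ : ‖x₀‖ = 1 := by simpa using hx₀
  refine ⟨⟪T x₀, x₀⟫, hT x₀ (norm_ne_zero_iff.1 (by simp [hx₀])), fun x => ?_⟩
  rcases eq_or_ne x 0 with rfl | hx
  · simp
  have hxn : 0 < ‖x‖ := norm_pos_iff.2 hx
  have hle : ⟪T x₀, x₀⟫ ≤ ⟪T (‖x‖⁻¹ • x), ‖x‖⁻¹ • x⟫ :=
    hmin (show ‖x‖⁻¹ • x ∈ Metric.sphere (0 : E) 1 by simp [norm_smul, hxn.ne'])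
  rw [map_smul, real_inner_smul_left, real_inner_smul_right, ← mul_assoc] at hle
  calc ⟪T x₀, x₀⟫ * ‖x‖ ^ 2 ≤ ‖x‖⁻¹ * ‖x‖⁻¹ * ⟪T x, x⟫ * ‖x‖ ^ 2 := by gcongr
    _ = ⟪T x, x⟫ := by field_simp

lemma norm_one_sub_smul_le_exp {T : E →L[ℝ] E} {μ t : ℝ} (hT : ∀ x, μ * ‖x‖ ^ 2 ≤ ⟪T x, x⟫)
    (ht : 0 ≤ t) (htT : t * ‖T‖ ^ 2 ≤ μ) : ‖1 - t • T‖ ≤ Real.exp (-(μ / 2 * t)) := by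
  refine opNorm_le_bound _ (Real.exp_pos _).le fun x => ?_
  have hTx : ‖T x‖ ^ 2 ≤ ‖T‖ ^ 2 * ‖x‖ ^ 2 := by
    rw [← mul_pow]; gcongr; exact T.le_opNorm x
  refine (pow_le_pow_iff_left₀ (norm_nonneg _) (by positivity) two_ne_zero).1 ?_
  calc ‖(1 - t • T) x‖ ^ 2 = ‖x‖ ^ 2 - 2 * t * ⟪T x, x⟫ + t ^ 2 * ‖T x‖ ^ 2 := by
        rw [_root_.sub_apply, _root_.smul_apply, IsOneApplyEqSelf.one_apply_eq_self,
          norm_sub_sq_real, real_inner_smul_right, norm_smul, real_inner_comm, Real.norm_eq_abs,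
          mul_pow, sq_abs]
        ring
    _ ≤ (1 - μ * t) * ‖x‖ ^ 2 := by
      nlinarith [mul_le_mul_of_nonneg_left (hT x) ht, mul_le_mul_of_nonneg_left hTx (sq_nonneg t),
        mul_le_mul_of_nonneg_right htT (mul_nonneg ht (sq_nonneg ‖x‖))]
    _ ≤ Real.exp (-(μ * t)) * ‖x‖ ^ 2 := by
      gcongr; linarith [Real.add_one_le_exp (-(μ * t))]
    _ = (Real.exp (-(μ / 2 * t)) * ‖x‖) ^ 2 := by
      rw [mul_pow, sq (Real.exp _), ← Real.exp_add]
      ring_nf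

end ContinuousLinearMap

lemma Matrix.PosDef.exists_norm_one_sub_smul_le_exp {n : Type*} [Fintype n] [DecidableEq n]
    {H : Matrix n n ℝ} (hH : H.PosDef) :
    ∃ c > 0, ∃ δ > 0, ∀ t, 0 ≤ t → t ≤ δ → ‖1 - t • H‖ ≤ Real.exp (-(c * t)) := by
  set T := toEuclideanCLM (n := n) (𝕜 := ℝ) H
  obtain ⟨μ, hμ, hT⟩ := T.exists_pos_mul_norm_sq_le_inner fun x hx => by
    rw [EuclideanSpace.inner_eq_star_dotProduct]
    exact hH.dotProduct_mulVec_pos (by simpa using hx)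
  refine ⟨μ / 2, by positivity, μ / (‖T‖ ^ 2 + 1), by positivity, fun t ht htδ => ?_⟩
  have htT : t * ‖T‖ ^ 2 ≤ μ := by
    rw [le_div_iff₀ (by positivity)] at htδ
    nlinarith
  rw [cstar_norm_def, map_sub, map_one, map_smul]
  exact T.norm_one_sub_smul_le_exp hT ht htT

lemma tendsto_const_mul_rpow_neg {c α : ℝ} (hα : 0 < α) :
    Tendsto (fun l : ℕ => c * (l : ℝ) ^ (-α)) atTop (𝓝 0) := by
  simpa using ((tendsto_rpow_neg_atTop hα).comp tendsto_natCast_atTop_atTop).const_mul c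

lemma tendsto_sum_range_const_mul_rpow_neg {c α : ℝ} (hc : 0 < c) (hα : α ≤ 1) :
    Tendsto (fun n => ∑ l ∈ range n, c * (l : ℝ) ^ (-α)) atTop atTop := by
  refine (not_summable_iff_tendsto_nat_atTop_of_nonneg fun l => by positivity).1 fun hs => ?_
  have := Real.summable_nat_rpow.1 ((summable_mul_left_iff hc.ne').1 hs)
  linarith

lemma matOpNorm_eq_norm {p : ℕ} (M : Matrix (Fin p) (Fin p) ℝ) : matOpNorm M = ‖M‖ := rfl

theorem stmt5_general (p : ℕ)
    (H₀ : Matrix (Fin p) (Fin p) ℝ) (hH₀ : H₀.PosDef)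
    (γ₁ α : ℝ) (hγ₁ : 0 < γ₁) (hα : 1 / 2 < α ∧ α < 1)
    (γ : ℕ → ℝ) (hγ : ∀ i : ℕ, γ i = γ₁ * (i : ℝ) ^ (-α))
    (A B : ℕ → ℕ → Matrix (Fin p) (Fin p) ℝ)
    (hA : ∀ j n, A j n = γ j • ∑ i ∈ Finset.Icc j n,
      (((List.range' (j + 1) (i - j)).map
        fun l => (1 : Matrix (Fin p) (Fin p) ℝ) - γ l • H₀).prod))
    (hB : ∀ j n, B j n = A j n - H₀⁻¹) :
    Tendsto (fun n : ℕ => matOpNorm (((n : ℝ))⁻¹ • ∑ j ∈ Finset.Icc 1 n, B j n))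
      atTop (nhds 0) := by
  set Q : ℕ → Matrix (Fin p) (Fin p) ℝ := prodOneSub (fun l => γ l • H₀) 0
  have hsum : ∀ n, ∑ j ∈ Icc 1 n, B j n = -(H₀⁻¹ * ∑ i ∈ range n, Q (i + 1)) := fun n => by
    rw [range_eq_Ico, sum_Ico_add' Q 0 n 1, zero_add, Ico_add_one_right_eq_Icc]
    simp only [hB, hA]
    exact sum_smul_sum_prodOneSub_sub (H₀.nonsing_inv_mul hH₀.det_pos.ne'.isUnit) γ n
  obtain ⟨c, hc, δ, hδ, hcontr⟩ := hH₀.exists_norm_one_sub_smul_le_exp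
  have hγ_eq : γ = fun l : ℕ => γ₁ * (l : ℝ) ^ (-α) := funext hγ
  have hγ_small : ∀ᶠ l in atTop, γ l ≤ δ := by
    rw [hγ_eq]
    exact (tendsto_const_mul_rpow_neg (by linarith)).eventually (ge_mem_nhds hδ)
  have hQ : Tendsto Q atTop (𝓝 0) := by
    refine tendsto_prodOneSub_zero (f := fun l => c * γ l)
      (hγ_small.mono fun l hl => hcontr _ (by rw [hγ]; positivity) hl) ?_
    simp_rw [← mul_sum, hγ_eq]
    exact (tendsto_sum_range_const_mul_rpow_neg hγ₁ hα.2.le).const_mul_atTop hc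
  have hces := ((hQ.comp (tendsto_add_atTop_nat 1)).cesaro_smul).const_mul (-H₀⁻¹)
  rw [mul_zero] at hces
  simp_rw [matOpNorm_eq_norm, ← tendsto_zero_iff_norm_tendsto_zero, hsum]
  refine hces.congr fun n => ?_
  simp only [Function.comp_apply, neg_mul, smul_neg, mul_smul_comm]

/-- Cesàro convergence `(1/n) ∑_{j=1}^n B_j^n → 0`
(Lemma 1 of Polyak–Juditsky, second part), stated as convergence to the zero
matrix in operator norm. -/
theorem stmt5 (p : ℕ) (hp : 1 ≤ p)
    (H₀ : Matrix (Fin p) (Fin p) ℝ) (hH₀symm : H₀.IsSymm) (hH₀ : H₀.PosDef)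
    (γ₁ α : ℝ) (hγ₁ : 0 < γ₁) (hα : 1 / 2 < α ∧ α < 1)
    (γ : ℕ → ℝ) (hγ : ∀ i : ℕ, γ i = γ₁ * (i : ℝ) ^ (-α))
    (A B : ℕ → ℕ → Matrix (Fin p) (Fin p) ℝ)
    (hA : ∀ j n, A j n = γ j • ∑ i ∈ Finset.Icc j n,
      (((List.range' (j + 1) (i - j)).map
        fun l => (1 : Matrix (Fin p) (Fin p) ℝ) - γ l • H₀).prod))
    (hB : ∀ j n, B j n = A j n - H₀⁻¹) :
    Tendsto (fun n : ℕ => matOpNorm (((n : ℝ))⁻¹ • ∑ j ∈ Finset.Icc 1 n, B j n))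
      atTop (nhds 0) :=
  stmt5_general p H₀ hH₀ γ₁ α hγ₁ hα γ hγ A B hA hB
end

section
/- Let (Ω, 𝓕, P) be a probability space with a filtration 𝓕₁ ⊆ 𝓕₂ ⊆ ⋯ ⊆ 𝓕. For each n ≥ 1 let V_n, W_n, a_n, b_n be non-negative, integrable, 𝓕_n-measurable random variables such that E(V_n | 𝓕_{n−1}) ≤ V_{n−1}(1 + a_{n−1}) + b_{n−1} − W_{n−1} almost surely for every n ≥ 2. Then, almost surely on the event {∑_{n=1}^∞ a_n < ∞ and ∑_{n=1}^∞ b_n < ∞}, the sequence V_n converges to a finite limit and ∑_{n=1}^∞ W_n < ∞. -/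
/-!
Let `A n = ∏ k < n, (1 + a k)`. Dividing the recursion by `A (n + 1)` shows that
`U n = V n / A n + ∑ k < n, (W k - b k) / A (k + 1)` is a supermartingale, bounded below by
`-∑ k < n, b k`. Stopping `U` just before these (predictable) partial sums exceed a level `c`
gives a supermartingale bounded below by `-c`, hence L¹-bounded and a.s. convergent; on
`{∑ b < ∞}` it coincides with `U` once `c ≥ ∑ b`. Finally `1 ≤ A n ≤ exp (∑ a)`, so on
`{∑ a < ∞}` the convergence of `U` forces `∑ W / A < ∞`, hence `∑ W < ∞`, and then `V` converges.
-/

open MeasureTheory Filter Finset Topology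
open scoped ENNReal

namespace MeasureTheory

variable {Ω : Type*} {m0 : MeasurableSpace Ω} {μ : Measure Ω} {𝒢 : Filtration ℕ m0}

theorem Integrable.div_of_one_le {f g : Ω → ℝ} (hf : Integrable f μ)
    (hg : AEStronglyMeasurable g μ) (hg1 : ∀ ω, 1 ≤ g ω) :
    Integrable (fun ω => f ω / g ω) μ :=
  hf.norm.mono' (hf.aestronglyMeasurable.div₀ hg) <| ae_of_all _ fun ω => by
    rw [norm_div, Real.norm_of_nonneg (zero_le_one.trans (hg1 ω))]
    exact div_le_self (norm_nonneg _) (hg1 ω)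

theorem Supermartingale.exists_ae_tendsto_of_bddBelow [IsFiniteMeasure μ] {f : ℕ → Ω → ℝ}
    (hf : Supermartingale f 𝒢 μ) {c : ℝ} (hc : ∀ n ω, c ≤ f n ω) :
    ∀ᵐ ω ∂μ, ∃ l, Tendsto (fun n => f n ω) atTop (𝓝 l) := by
  set K := ∫ ω, f 0 ω ∂μ + 2 * |c| * μ.real Set.univ
  have hL1 : ∀ n, eLpNorm (-f n) 1 μ ≤ (K.toNNReal : ℝ≥0∞) := fun n => by
    rw [eLpNorm_neg, eLpNorm_one_eq_lintegral_enorm,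
      ← ofReal_integral_norm_eq_lintegral_enorm (hf.integrable n)]
    refine ENNReal.ofReal_le_ofReal ?_
    calc ∫ ω, ‖f n ω‖ ∂μ ≤ ∫ ω, (f n ω + 2 * |c|) ∂μ :=
          integral_mono (hf.integrable n).norm ((hf.integrable n).add (integrable_const _))
            fun ω => by
              rw [Real.norm_eq_abs, abs_le]
              constructor <;> linarith [hc n ω, neg_abs_le c, le_abs_self c]
      _ = ∫ ω, f n ω ∂μ + 2 * |c| * μ.real Set.univ := by
          rw [integral_add (hf.integrable n) (integrable_const _), integral_const, smul_eq_mul,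
            mul_comm]
      _ ≤ K := by
          have := hf.setIntegral_le n.zero_le MeasurableSet.univ
          simp only [setIntegral_univ] at this
          linarith
  filter_upwards [hf.neg.exists_ae_tendsto_of_bdd hL1] with ω ⟨l, hl⟩
  exact ⟨-l, by simpa using hl.neg⟩

/-- The increment `f (k + 1) - f k` is kept only while `∑ j ≤ k, b j ≤ c`. That partial sum is
`𝒢 k`-measurable, so this is a martingale transform of `f` by a predictable `0`/`1` process; for
`b ≥ 0` it is `f` stopped at the last time the partial sums of `b` stay below `c`. -/
noncomputable def stoppedBeforeSumExceeds (f b : ℕ → Ω → ℝ) (c : ℝ) (n : ℕ) : Ω → ℝ :=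
  f 0 + ∑ k ∈ range n, {ω | ∑ j ∈ range (k + 1), b j ω ≤ c}.indicator 1 * (f (k + 1) - f k)

section StoppedBeforeSumExceeds

variable {f b : ℕ → Ω → ℝ} {c : ℝ}

theorem stoppedBeforeSumExceeds_zero : stoppedBeforeSumExceeds f b c 0 = f 0 := by
  simp [stoppedBeforeSumExceeds]

theorem stoppedBeforeSumExceeds_succ (n : ℕ) (ω : Ω) :
    stoppedBeforeSumExceeds f b c (n + 1) ω = stoppedBeforeSumExceeds f b c n ω +
      {ω | ∑ j ∈ range (n + 1), b j ω ≤ c}.indicator 1 ω * (f (n + 1) ω - f n ω) := by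
  simp only [stoppedBeforeSumExceeds, sum_range_succ, Pi.add_apply, Finset.sum_apply,
    Pi.mul_apply, Pi.sub_apply]
  ring

theorem stoppedBeforeSumExceeds_eq_of_sum_le (hb : ∀ n ω, 0 ≤ b n ω) :
    ∀ n ω, ∑ k ∈ range n, b k ω ≤ c → stoppedBeforeSumExceeds f b c n ω = f n ω
  | 0, _, _ => by rw [stoppedBeforeSumExceeds_zero]
  | n + 1, ω, h => by
    have hn : ∑ k ∈ range n, b k ω ≤ c := by
      rw [sum_range_succ] at h; linarith [hb n ω]
    rw [stoppedBeforeSumExceeds_succ, stoppedBeforeSumExceeds_eq_of_sum_le hb n ω hn,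
      Set.indicator_of_mem (show ω ∈ {ω | ∑ j ∈ range (n + 1), b j ω ≤ c} from h)]
    simp

theorem le_stoppedBeforeSumExceeds (hb : ∀ n ω, 0 ≤ b n ω)
    (hf : ∀ n ω, -∑ k ∈ range n, b k ω ≤ f n ω) (hc : 0 ≤ c) :
    ∀ n ω, -c ≤ stoppedBeforeSumExceeds f b c n ω
  | 0, ω => by
    have := hf 0 ω
    rw [sum_range_zero, neg_zero] at this
    rw [stoppedBeforeSumExceeds_zero]
    linarith
  | n + 1, ω => by
    by_cases h : ∑ k ∈ range (n + 1), b k ω ≤ c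
    · rw [stoppedBeforeSumExceeds_eq_of_sum_le hb _ ω h]
      linarith [hf (n + 1) ω]
    · rw [stoppedBeforeSumExceeds_succ,
        Set.indicator_of_notMem (show ω ∉ {ω | ∑ j ∈ range (n + 1), b j ω ≤ c} from h)]
      simpa using le_stoppedBeforeSumExceeds hb hf hc n ω

theorem supermartingale_stoppedBeforeSumExceeds [IsFiniteMeasure μ]
    (hf : Supermartingale f 𝒢 μ) (hb : StronglyAdapted 𝒢 b) (c : ℝ) :
    Supermartingale (stoppedBeforeSumExceeds f b c) 𝒢 μ := by
  have hξ : StronglyAdapted 𝒢 fun k =>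
      {ω | ∑ j ∈ range (k + 1), b j ω ≤ c}.indicator (1 : Ω → ℝ) :=
    fun k => stronglyMeasurable_one.indicator <| measurableSet_le
      (Finset.stronglyMeasurable_fun_sum _ fun j hj =>
        hb.stronglyMeasurable_le (Nat.lt_succ_iff.mp (mem_range.mp hj))).measurable
      measurable_const
  have htransform := (hf.neg.sum_mul_sub hξ (R := 1)
    (fun _ _ => Set.indicator_le_self' (by simp) _) fun _ _ => Set.indicator_nonneg (by simp) _).neg
  have hsum : stoppedBeforeSumExceeds f b c = (-fun n => ∑ k ∈ range n,
      {ω | ∑ j ∈ range (k + 1), b j ω ≤ c}.indicator 1 * ((-f) (k + 1) - (-f) k))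
        + fun _ => f 0 := by
    funext n
    simp only [stoppedBeforeSumExceeds, Pi.add_apply, Pi.neg_apply, neg_sub_neg,
      ← sum_neg_distrib, ← mul_neg, neg_sub, add_comm]
  rw [hsum]
  exact htransform.add_martingale
    (martingale_const_fun 𝒢 μ (hf.stronglyMeasurable 0) (hf.integrable 0))

end StoppedBeforeSumExceeds

theorem Supermartingale.exists_ae_tendsto_of_neg_sum_le [IsFiniteMeasure μ] {f b : ℕ → Ω → ℝ}
    (hf : Supermartingale f 𝒢 μ) (hb : StronglyAdapted 𝒢 b) (hb0 : ∀ n ω, 0 ≤ b n ω)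
    (hfb : ∀ n ω, -∑ k ∈ range n, b k ω ≤ f n ω) :
    ∀ᵐ ω ∂μ, Summable (fun n => b n ω) → ∃ l, Tendsto (fun n => f n ω) atTop (𝓝 l) := by
  have hstopped : ∀ᵐ ω ∂μ, ∀ c : ℕ,
      ∃ l, Tendsto (fun n => stoppedBeforeSumExceeds f b c n ω) atTop (𝓝 l) :=
    ae_all_iff.mpr fun c =>
      (supermartingale_stoppedBeforeSumExceeds hf hb c).exists_ae_tendsto_of_bddBelow
        (le_stoppedBeforeSumExceeds hb0 hfb c.cast_nonneg)
  filter_upwards [hstopped] with ω hω hsum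
  obtain ⟨l, hl⟩ := hω ⌈∑' n, b n ω⌉₊
  refine ⟨l, hl.congr fun n => stoppedBeforeSumExceeds_eq_of_sum_le hb0 n ω ?_⟩
  exact (hsum.sum_le_tsum _ fun k _ => hb0 k ω).trans (Nat.le_ceil _)

end MeasureTheory

namespace RobbinsSiegmund

noncomputable def compound (a : ℕ → ℝ) (n : ℕ) : ℝ :=
  ∏ k ∈ range n, (1 + a k)

noncomputable def discounted (v w a b : ℕ → ℝ) (n : ℕ) : ℝ :=
  v n / compound a n + ∑ k ∈ range n, (w k - b k) / compound a (k + 1)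

section Deterministic

variable {v w a b : ℕ → ℝ}

theorem compound_succ (a : ℕ → ℝ) (n : ℕ) : compound a (n + 1) = compound a n * (1 + a n) :=
  prod_range_succ _ _

theorem one_le_compound (ha : ∀ k, 0 ≤ a k) (n : ℕ) : 1 ≤ compound a n :=
  one_le_prod fun k _ => le_add_of_nonneg_right (ha k)

theorem compound_pos (ha : ∀ k, 0 ≤ a k) (n : ℕ) : 0 < compound a n :=
  one_pos.trans_le (one_le_compound ha n)

theorem monotone_compound (ha : ∀ k, 0 ≤ a k) : Monotone (compound a) :=
  monotone_nat_of_le_succ fun n => by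
    rw [compound_succ]
    exact le_mul_of_one_le_right (compound_pos ha n).le (le_add_of_nonneg_right (ha n))

theorem compound_le_exp_tsum (ha : ∀ k, 0 ≤ a k) (hsa : Summable a) (n : ℕ) :
    compound a n ≤ Real.exp (∑' k, a k) :=
  calc compound a n ≤ ∏ k ∈ range n, Real.exp (a k) :=
        prod_le_prod (fun k _ => by linarith [ha k]) fun k _ => by
          linarith [Real.add_one_le_exp (a k)]
    _ = Real.exp (∑ k ∈ range n, a k) := (Real.exp_sum _ _).symm
    _ ≤ Real.exp (∑' k, a k) := Real.exp_le_exp.mpr (hsa.sum_le_tsum _ fun k _ => ha k)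

theorem summable_div_compound_iff (ha : ∀ k, 0 ≤ a k) (hsa : Summable a) {x : ℕ → ℝ}
    (hx : ∀ k, 0 ≤ x k) : Summable (fun k => x k / compound a (k + 1)) ↔ Summable x := by
  have hpos := compound_pos ha
  refine ⟨fun h => ?_, fun h => ?_⟩
  · refine (h.mul_left (Real.exp (∑' k, a k))).of_nonneg_of_le hx fun k => ?_
    rw [mul_div_assoc', le_div_iff₀ (hpos _), mul_comm]
    exact mul_le_mul_of_nonneg_right (compound_le_exp_tsum ha hsa _) (hx k)
  · exact h.of_nonneg_of_le (fun k => div_nonneg (hx k) (hpos _).le)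
      fun k => div_le_self (hx k) (one_le_compound ha _)

theorem neg_sum_le_discounted (hv : ∀ k, 0 ≤ v k) (hw : ∀ k, 0 ≤ w k) (ha : ∀ k, 0 ≤ a k)
    (hb : ∀ k, 0 ≤ b k) (n : ℕ) : -∑ k ∈ range n, b k ≤ discounted v w a b n := by
  have hv' : 0 ≤ v n / compound a n := div_nonneg (hv n) (compound_pos ha n).le
  have hsum : -∑ k ∈ range n, b k ≤ ∑ k ∈ range n, (w k - b k) / compound a (k + 1) := by
    rw [← sum_neg_distrib]
    refine sum_le_sum fun k _ => ?_
    calc -b k ≤ -b k / compound a (k + 1) := by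
          rw [neg_div, neg_le_neg_iff]; exact div_le_self (hb k) (one_le_compound ha _)
      _ ≤ (w k - b k) / compound a (k + 1) :=
          div_le_div_of_nonneg_right (by linarith [hw k]) (compound_pos ha _).le
  rw [discounted]
  linarith

theorem bound_div_compound_add_sum_eq_discounted (ha : ∀ k, 0 ≤ a k) (n : ℕ) :
    (v n * (1 + a n) + b n - w n) / compound a (n + 1)
      + ∑ k ∈ range (n + 1), (w k - b k) / compound a (k + 1) = discounted v w a b n := by
  have hA := (compound_pos ha n).ne'
  have ha' : 1 + a n ≠ 0 := by linarith [ha n]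
  rw [discounted, sum_range_succ, compound_succ]
  field_simp
  ring

theorem discounted_eq_add_sub (n : ℕ) : discounted v w a b n = v n / compound a n
    + ∑ k ∈ range n, w k / compound a (k + 1) - ∑ k ∈ range n, b k / compound a (k + 1) := by
  rw [discounted, add_sub_assoc, ← sum_sub_distrib]
  simp only [sub_div]

theorem tendsto_and_summable_of_tendsto_discounted (hv : ∀ k, 0 ≤ v k) (hw : ∀ k, 0 ≤ w k)
    (ha : ∀ k, 0 ≤ a k) (hb : ∀ k, 0 ≤ b k) (hsa : Summable a) (hsb : Summable b) {L : ℝ}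
    (hU : Tendsto (discounted v w a b) atTop (𝓝 L)) :
    (∃ c, Tendsto v atTop (𝓝 c)) ∧ Summable w := by
  have hpos := compound_pos ha
  have hsbA : Summable fun k => b k / compound a (k + 1) :=
    (summable_div_compound_iff ha hsa hb).mpr hsb
  obtain ⟨M, hM⟩ := hU.bddAbove_range
  have hswA : Summable fun k => w k / compound a (k + 1) := by
    refine summable_of_sum_range_le (c := M + ∑' k, b k / compound a (k + 1))
      (fun k => div_nonneg (hw k) (hpos _).le) fun n => ?_
    have hUn : discounted v w a b n ≤ M := hM ⟨n, rfl⟩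
    have hvn : 0 ≤ v n / compound a n := div_nonneg (hv n) (hpos n).le
    have hbn := hsbA.sum_le_tsum (range n) fun k _ => div_nonneg (hb k) (hpos _).le
    rw [discounted_eq_add_sub] at hUn
    linarith
  refine ⟨?_, (summable_div_compound_iff ha hsa hw).mp hswA⟩
  obtain ⟨A, hA⟩ : ∃ A, Tendsto (compound a) atTop (𝓝 A) :=
    ⟨_, tendsto_atTop_ciSup (monotone_compound ha)
      ⟨_, Set.forall_mem_range.mpr (compound_le_exp_tsum ha hsa)⟩⟩
  have hv_eq : v = fun n => (discounted v w a b n - ∑ k ∈ range n, w k / compound a (k + 1)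
      + ∑ k ∈ range n, b k / compound a (k + 1)) * compound a n := by
    funext n
    rw [discounted_eq_add_sub]
    field_simp [(hpos n).ne']
    ring
  rw [hv_eq]
  exact ⟨_, ((hU.sub hswA.hasSum.tendsto_sum_nat).add hsbA.hasSum.tendsto_sum_nat).mul hA⟩

end Deterministic

section Stochastic

variable {Ω : Type*} {m0 : MeasurableSpace Ω} {μ : Measure Ω} {𝒢 : Filtration ℕ m0}
  {V W a b : ℕ → Ω → ℝ}

noncomputable def discountedProcess (V W a b : ℕ → Ω → ℝ) (n : ℕ) (ω : Ω) : ℝ :=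
  discounted (V · ω) (W · ω) (a · ω) (b · ω) n

theorem stronglyMeasurable_compound (ha : StronglyAdapted 𝒢 a) {n m : ℕ} (hnm : n ≤ m + 1) :
    StronglyMeasurable[𝒢 m] fun ω => compound (a · ω) n :=
  Finset.stronglyMeasurable_fun_prod _ fun k hk =>
    stronglyMeasurable_const.add (ha.stronglyMeasurable_le (by have := mem_range.mp hk; omega))

theorem stronglyMeasurable_sum_div_compound (hW : StronglyAdapted 𝒢 W) (ha : StronglyAdapted 𝒢 a)
    (hb : StronglyAdapted 𝒢 b) {n m : ℕ} (hnm : n ≤ m + 1) :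
    StronglyMeasurable[𝒢 m] fun ω =>
      ∑ k ∈ range n, (W k ω - b k ω) / compound (a · ω) (k + 1) :=
  Finset.stronglyMeasurable_fun_sum _ fun k hk => by
    have hk : k + 1 ≤ m + 1 := by have := mem_range.mp hk; omega
    exact ((hW.stronglyMeasurable_le (by omega)).sub (hb.stronglyMeasurable_le (by omega))).div
      (stronglyMeasurable_compound ha hk)

theorem integrable_sum_div_compound (hWint : ∀ n, Integrable (W n) μ) (ha : StronglyAdapted 𝒢 a)
    (ha0 : ∀ n ω, 0 ≤ a n ω) (hbint : ∀ n, Integrable (b n) μ) (n : ℕ) :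
    Integrable (fun ω => ∑ k ∈ range n, (W k ω - b k ω) / compound (a · ω) (k + 1)) μ :=
  integrable_finsetSum _ fun k _ => Integrable.div_of_one_le ((hWint k).sub (hbint k))
    ((stronglyMeasurable_compound ha (m := k) le_rfl).mono (𝒢.le k)).aestronglyMeasurable
    fun ω => one_le_compound (ha0 · ω) _

theorem supermartingale_discountedProcess [IsFiniteMeasure μ]
    (hV : StronglyAdapted 𝒢 V) (hVint : ∀ n, Integrable (V n) μ)
    (hW : StronglyAdapted 𝒢 W) (hWint : ∀ n, Integrable (W n) μ)
    (ha : StronglyAdapted 𝒢 a) (ha0 : ∀ n ω, 0 ≤ a n ω)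
    (hb : StronglyAdapted 𝒢 b) (hbint : ∀ n, Integrable (b n) μ)
    (hrec : ∀ n, μ[V (n + 1) | 𝒢 n] ≤ᵐ[μ] fun ω => V n ω * (1 + a n ω) + b n ω - W n ω) :
    Supermartingale (discountedProcess V W a b) 𝒢 μ := by
  have hVA : ∀ n, Integrable (fun ω => V n ω / compound (a · ω) n) μ := fun n =>
    Integrable.div_of_one_le (hVint n)
      ((stronglyMeasurable_compound ha (m := n) (by omega)).mono (𝒢.le n)).aestronglyMeasurable
      fun ω => one_le_compound (ha0 · ω) _
  have hadapted : StronglyAdapted 𝒢 (discountedProcess V W a b) := fun n =>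
    ((hV n).div (stronglyMeasurable_compound ha (by omega))).add
      (stronglyMeasurable_sum_div_compound hW ha hb (by omega))
  refine supermartingale_nat hadapted
    (fun n => (hVA n).add (integrable_sum_div_compound hWint ha ha0 hbint n)) fun n => ?_
  set r : Ω → ℝ := fun ω => (compound (a · ω) (n + 1))⁻¹
  set S : Ω → ℝ := fun ω => ∑ k ∈ range (n + 1), (W k ω - b k ω) / compound (a · ω) (k + 1)
  have hr : StronglyMeasurable[𝒢 n] r :=
    (stronglyMeasurable_compound ha le_rfl).measurable.inv.stronglyMeasurable
  have hS : StronglyMeasurable[𝒢 n] S := stronglyMeasurable_sum_div_compound hW ha hb le_rfl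
  have hSint : Integrable S μ := integrable_sum_div_compound hWint ha ha0 hbint _
  have hrV : Integrable (r * V (n + 1)) μ :=
    (hVA (n + 1)).congr (ae_of_all _ fun ω => div_eq_inv_mul _ _)
  have hsplit : discountedProcess V W a b (n + 1) = r * V (n + 1) + S :=
    funext fun ω => by
      show V (n + 1) ω / _ + _ = (compound _ _)⁻¹ * V (n + 1) ω + _
      rw [div_eq_inv_mul]
  filter_upwards [condExp_add hrV hSint (𝒢 n),
    condExp_mul_of_stronglyMeasurable_left hr hrV (hVint _), hrec n] with ω hadd hmul hrecω
  rw [hsplit, hadd, Pi.add_apply, condExp_of_stronglyMeasurable (𝒢.le n) hS hSint, hmul,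
    Pi.mul_apply]
  have hr0 : 0 ≤ r ω := inv_nonneg.mpr (compound_pos (ha0 · ω) _).le
  calc r ω * μ[V (n + 1) | 𝒢 n] ω + S ω
      ≤ r ω * (V n ω * (1 + a n ω) + b n ω - W n ω) + S ω := by gcongr
    _ = discountedProcess V W a b n ω := by
      rw [discountedProcess, ← bound_div_compound_add_sum_eq_discounted (ha0 · ω) n,
        div_eq_inv_mul]

theorem ae_tendsto_and_summable [IsFiniteMeasure μ]
    (hV : StronglyAdapted 𝒢 V) (hVint : ∀ n, Integrable (V n) μ) (hV0 : ∀ n ω, 0 ≤ V n ω)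
    (hW : StronglyAdapted 𝒢 W) (hWint : ∀ n, Integrable (W n) μ) (hW0 : ∀ n ω, 0 ≤ W n ω)
    (ha : StronglyAdapted 𝒢 a) (ha0 : ∀ n ω, 0 ≤ a n ω)
    (hb : StronglyAdapted 𝒢 b) (hbint : ∀ n, Integrable (b n) μ) (hb0 : ∀ n ω, 0 ≤ b n ω)
    (hrec : ∀ n, μ[V (n + 1) | 𝒢 n] ≤ᵐ[μ] fun ω => V n ω * (1 + a n ω) + b n ω - W n ω) :
    ∀ᵐ ω ∂μ, Summable (fun n => a n ω) → Summable (fun n => b n ω) →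
      (∃ c, Tendsto (fun n => V n ω) atTop (𝓝 c)) ∧ Summable fun n => W n ω := by
  have hU := supermartingale_discountedProcess hV hVint hW hWint ha ha0 hb hbint hrec
  filter_upwards [hU.exists_ae_tendsto_of_neg_sum_le hb hb0 fun n ω =>
    neg_sum_le_discounted (hV0 · ω) (hW0 · ω) (ha0 · ω) (hb0 · ω) n] with ω hconv hsa hsb
  obtain ⟨L, hL⟩ := hconv hsb
  exact tendsto_and_summable_of_tendsto_discounted (hV0 · ω) (hW0 · ω) (ha0 · ω) (hb0 · ω)
    hsa hsb hL

end Stochastic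

end RobbinsSiegmund

theorem stmt6_general {Ω : Type*} {m0 : MeasurableSpace Ω} (μ : Measure Ω)
    [IsProbabilityMeasure μ] (ℱ : Filtration ℕ m0)
    (V W a b : ℕ → Ω → ℝ)
    (hVmeas : ∀ n, 1 ≤ n → StronglyMeasurable[ℱ n] (V n))
    (hVint : ∀ n, 1 ≤ n → Integrable (V n) μ)
    (hVnonneg : ∀ n, 1 ≤ n → ∀ ω, 0 ≤ V n ω)
    (hWmeas : ∀ n, 1 ≤ n → StronglyMeasurable[ℱ n] (W n))
    (hWint : ∀ n, 1 ≤ n → Integrable (W n) μ)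
    (hWnonneg : ∀ n, 1 ≤ n → ∀ ω, 0 ≤ W n ω)
    (hameas : ∀ n, 1 ≤ n → StronglyMeasurable[ℱ n] (a n))
    (hanonneg : ∀ n, 1 ≤ n → ∀ ω, 0 ≤ a n ω)
    (hbmeas : ∀ n, 1 ≤ n → StronglyMeasurable[ℱ n] (b n))
    (hbint : ∀ n, 1 ≤ n → Integrable (b n) μ)
    (hbnonneg : ∀ n, 1 ≤ n → ∀ ω, 0 ≤ b n ω)
    (hrec : ∀ n, 2 ≤ n → ∀ᵐ ω ∂μ,
      (μ[V n | ℱ (n - 1)]) ω ≤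
        V (n - 1) ω * (1 + a (n - 1) ω) + b (n - 1) ω - W (n - 1) ω) :
    ∀ᵐ ω ∂μ,
      ((Summable fun n => a n ω) ∧ (Summable fun n => b n ω)) →
        ((∃ c : ℝ, Tendsto (fun n => V n ω) atTop (nhds c)) ∧
          Summable fun n => W n ω) := by
  let 𝒢 : Filtration ℕ m0 :=
    ⟨fun n => ℱ (n + 1), fun _ _ h => ℱ.mono (by omega), fun _ => ℱ.le _⟩
  have hshift := RobbinsSiegmund.ae_tendsto_and_summable (𝒢 := 𝒢)
    (V := fun n => V (n + 1)) (W := fun n => W (n + 1))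
    (a := fun n => a (n + 1)) (b := fun n => b (n + 1))
    (fun n => hVmeas _ n.succ_pos) (fun n => hVint _ n.succ_pos)
    (fun n => hVnonneg _ n.succ_pos) (fun n => hWmeas _ n.succ_pos)
    (fun n => hWint _ n.succ_pos) (fun n => hWnonneg _ n.succ_pos)
    (fun n => hameas _ n.succ_pos) (fun n => hanonneg _ n.succ_pos)
    (fun n => hbmeas _ n.succ_pos) (fun n => hbint _ n.succ_pos)
    (fun n => hbnonneg _ n.succ_pos) (fun n => hrec (n + 2) (by omega))
  filter_upwards [hshift] with ω hω ⟨hsa, hsb⟩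
  obtain ⟨⟨c, hc⟩, hsW⟩ :=
    hω ((summable_nat_add_iff 1).mpr hsa) ((summable_nat_add_iff 1).mpr hsb)
  exact ⟨⟨c, (tendsto_add_atTop_iff_nat 1).mp hc⟩, (summable_nat_add_iff 1).mp hsW⟩

/-- the Robbins–Siegmund almost-supermartingale convergence theorem. -/
theorem stmt6 {Ω : Type*} {m0 : MeasurableSpace Ω} (μ : Measure Ω)
    [IsProbabilityMeasure μ] (ℱ : Filtration ℕ m0)
    (V W a b : ℕ → Ω → ℝ)
    (hVmeas : ∀ n, 1 ≤ n → StronglyMeasurable[ℱ n] (V n))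
    (hVint : ∀ n, 1 ≤ n → Integrable (V n) μ)
    (hVnonneg : ∀ n, 1 ≤ n → ∀ ω, 0 ≤ V n ω)
    (hWmeas : ∀ n, 1 ≤ n → StronglyMeasurable[ℱ n] (W n))
    (hWint : ∀ n, 1 ≤ n → Integrable (W n) μ)
    (hWnonneg : ∀ n, 1 ≤ n → ∀ ω, 0 ≤ W n ω)
    (hameas : ∀ n, 1 ≤ n → StronglyMeasurable[ℱ n] (a n))
    (haint : ∀ n, 1 ≤ n → Integrable (a n) μ)
    (hanonneg : ∀ n, 1 ≤ n → ∀ ω, 0 ≤ a n ω)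
    (hbmeas : ∀ n, 1 ≤ n → StronglyMeasurable[ℱ n] (b n))
    (hbint : ∀ n, 1 ≤ n → Integrable (b n) μ)
    (hbnonneg : ∀ n, 1 ≤ n → ∀ ω, 0 ≤ b n ω)
    (hrec : ∀ n, 2 ≤ n → ∀ᵐ ω ∂μ,
      (μ[V n | ℱ (n - 1)]) ω ≤
        V (n - 1) ω * (1 + a (n - 1) ω) + b (n - 1) ω - W (n - 1) ω) :
    ∀ᵐ ω ∂μ,
      ((Summable fun n => a n ω) ∧ (Summable fun n => b n ω)) →
        ((∃ c : ℝ, Tendsto (fun n => V n ω) atTop (nhds c)) ∧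
          Summable fun n => W n ω) :=
  stmt6_general μ ℱ V W a b hVmeas hVint hVnonneg hWmeas hWint hWnonneg hameas hanonneg hbmeas hbint
    hbnonneg hrec
end
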